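/- arXiv:1801.00624 — 5 statements merged into one kernel-verified Lean document; each statement's English description precedes it below -/
import Mathlib

section
/- Let n > 1 and let I_{2n+1} = {−n, −n+1, …, n}. Let Φ be the Feigin–Tsygan isomorphism gJ(R) → gl_{I_{2n+1}}(J(R)) determined by Φ(E_{m+r(2n+1), m'+s(2n+1)}(a)) = e_{m,m'}(E_{r,s}(a)) for m,m' ∈ I_{2n+1}, r,s ∈ ℤ, a ∈ R. Define o_J^{odd}(R) = {X ∈ gJ(R) : τ_0^s(X) = −X}, where τ_0^s(X) = J_0^s ᵗ(X) J_0^s with J_0^s = Σ_{i∈ℤ} E_{i,−i}, and define o_{2n+1}(J(R)) = {X ∈ gl_{I_{2n+1}}(J(R)) : X^† J_n^B + J_n^B X = 0}, where J_n^B = Σ_{i=−n}^{n} e_{i,−i} and X^† is the transpose of X with the anti-involution ∗ of J(R) (E_{k,l}(r)^∗ = E_{−l,−k}(r̄)) applied to each entry. Then Φ restricts to an isomorphism of Lie algebras o_J^{odd}(R) → o_{2n+1}(J(R)). -/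
/-!
`Φ` is just the reindexing of `ℤ × ℤ`-matrices along the bijection `I_{2n+1} × ℤ ≃ ℤ`,
`(m, r) ↦ m + r(2n+1)`. The images of `(m, r)` and `(m', s)` lie at distance between `|r - s|`
and `2n + |r - s|(2n+1)`, so bands are preserved in both directions and `Φ` is a bijection
between Jacobi matrices and `I_{2n+1}`-square matrices of Jacobi matrices; it is multiplicative
because a sum over `ℤ` splits into a sum over `I_{2n+1}` of sums over `ℤ`. The involution
`i ↦ -i` of `ℤ` becomes `(m, r) ↦ (-m, -r)`, hence
`Φ(X)^† = J_n^B Φ(τ_0^s X) J_n^B`, and so `Φ(X)^† J_n^B + J_n^B Φ(X) = J_n^B Φ(τ_0^s X + X)`,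
which vanishes iff `τ_0^s X = -X`.
-/

def HasBand {R : Type*} [Zero R] (A : ℤ → ℤ → R) (N : ℤ) : Prop :=
  ∀ i j : ℤ, N < |i - j| → A i j = 0

def IsJacobi {R : Type*} [Zero R] (A : ℤ → ℤ → R) : Prop := ∃ N : ℤ, HasBand A N

noncomputable def jmul {R : Type*} [Ring R] (A B : ℤ → ℤ → R) : ℤ → ℤ → R :=
  fun i j => ∑ᶠ l : ℤ, A i l * B l j

noncomputable def lieB {R : Type*} [Ring R] (A B : ℤ → ℤ → R) : ℤ → ℤ → R :=
  jmul A B - jmul B A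

def idMat {R : Type*} [Ring R] : ℤ → ℤ → R := fun i j => if i = j then 1 else 0

/-- `τ_0^s(X) = J_0^s ᵗ(X) J_0^s` where `J_0^s = Σ_i E_{i,−i}`; entrywise
`τ_0^s(X)_{i,j} = bar (X_{−j,−i})`. -/
def tau0s {R : Type*} (bar : R → R) (X : ℤ → ℤ → R) : ℤ → ℤ → R :=
  fun i j => bar (X (-j) (-i))

/-- The anti-involution `∗` of `J(R)`: `E_{k,l}(r)^∗ = E_{−l,−k}(r̄)`. -/
def astar {R : Type*} (bar : R → R) (X : ℤ → ℤ → R) : ℤ → ℤ → R :=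
  fun i j => bar (X (-j) (-i))

/-- The index set `I_{2n+1} = {−n, …, n}`. -/
noncomputable def Iodd (n : ℕ) : Finset ℤ := Finset.Icc (-(n : ℤ)) n

/-- The restriction of the Feigin–Tsygan isomorphism: `Φ(X)_{m,m'} (r,s) =
`X(m + r(2n+1), m' + s(2n+1))`. -/
def PhiOdd {R : Type*} (n : ℕ) (X : ℤ → ℤ → R) :
    {i : ℤ // i ∈ Iodd n} → {i : ℤ // i ∈ Iodd n} → ℤ → ℤ → R :=
  fun m m' r s => X ((m : ℤ) + r * (2 * n + 1)) ((m' : ℤ) + s * (2 * n + 1))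

/-- Multiplication of matrices indexed by `I_{2n+1}` with entries in `J(R)`. -/
noncomputable def matMulOdd {R : Type*} [Ring R] (n : ℕ)
    (A B : {i : ℤ // i ∈ Iodd n} → {i : ℤ // i ∈ Iodd n} → ℤ → ℤ → R) :
    {i : ℤ // i ∈ Iodd n} → {i : ℤ // i ∈ Iodd n} → ℤ → ℤ → R :=
  fun m m' => ∑ p : {i : ℤ // i ∈ Iodd n}, jmul (A m p) (B p m')

/-- `A^†`: transpose with `∗` applied to each entry. -/
def daggerOdd {R : Type*} (bar : R → R) (n : ℕ)
    (A : {i : ℤ // i ∈ Iodd n} → {i : ℤ // i ∈ Iodd n} → ℤ → ℤ → R) :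
    {i : ℤ // i ∈ Iodd n} → {i : ℤ // i ∈ Iodd n} → ℤ → ℤ → R :=
  fun m m' => astar bar (A m' m)

/-- `J_n^B = Σ_{i=−n}^{n} e_{i,−i}` (entries in `J(R)`). -/
def JnB {R : Type*} [Ring R] (n : ℕ) :
    {i : ℤ // i ∈ Iodd n} → {i : ℤ // i ∈ Iodd n} → ℤ → ℤ → R :=
  fun m m' => if (m' : ℤ) = -(m : ℤ) then idMat else 0

section Band

variable {R : Type*} [Zero R]

theorem HasBand.mono {A : ℤ → ℤ → R} {N N' : ℤ} (hA : HasBand A N) (hN : N ≤ N') :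
    HasBand A N' :=
  fun i j hij => hA i j (hN.trans_lt hij)

theorem exists_hasBand_of_isJacobi {ι κ : Type*} [Finite ι] [Finite κ]
    (A : ι → κ → ℤ → ℤ → R) (hA : ∀ i j, IsJacobi (A i j)) : ∃ N, ∀ i j, HasBand (A i j) N := by
  choose N hN using hA
  obtain ⟨M, hM⟩ := Finite.exists_le fun p : ι × κ => N p.1 p.2
  exact ⟨M, fun i j => (hN i j).mono (hM (i, j))⟩

end Band

theorem IsJacobi.finite_support_mul {R : Type*} [Ring R] {X : ℤ → ℤ → R} (hX : IsJacobi X)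
    (i : ℤ) (g : ℤ → R) : (Function.support fun l => X i l * g l).Finite := by
  obtain ⟨N, hN⟩ := hX
  refine (Set.finite_Icc (i - N) (i + N)).subset
    ((Function.support_mul_subset_left _ _).trans fun l hl => ?_)
  have hil : |i - l| ≤ N := not_lt.mp fun h => hl (hN i l h)
  rw [abs_le] at hil
  constructor <;> linarith

theorem finsum_eq_sum_finsum_of_equiv {α ι κ M : Type*} [Fintype ι] [AddCommMonoid M]
    (e : ι × κ ≃ α) (f : α → M) (hf : (Function.support f).Finite) :
    ∑ᶠ a, f a = ∑ i, ∑ᶠ k, f (e (i, k)) := by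
  rw [← finsum_comp_equiv e, finsum_curry _ (hf.preimage e.injective.injOn),
    finsum_eq_sum_of_fintype]

section Jacobi

variable {R : Type*} [Ring R]

@[simp]
theorem jmul_idMat (A : ℤ → ℤ → R) : jmul A idMat = A := by
  funext i j
  rw [jmul, finsum_eq_single _ j fun l hl => by simp [idMat, hl]]
  simp [idMat]

@[simp]
theorem idMat_jmul (A : ℤ → ℤ → R) : jmul idMat A = A := by
  funext i j
  rw [jmul, finsum_eq_single _ i fun l hl => by simp [idMat, Ne.symm hl]]
  simp [idMat]

@[simp]
theorem jmul_zero (A : ℤ → ℤ → R) : jmul A 0 = 0 := by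
  funext i j
  simp [jmul]

@[simp]
theorem zero_jmul (A : ℤ → ℤ → R) : jmul 0 A = 0 := by
  funext i j
  simp [jmul]

end Jacobi

namespace Iodd

variable {n : ℕ}

theorem mem_iff {i : ℤ} : i ∈ Iodd n ↔ -(n : ℤ) ≤ i ∧ i ≤ n := Finset.mem_Icc

def neg (m : Iodd n) : Iodd n :=
  ⟨-m, by have := mem_iff.mp m.2; exact mem_iff.mpr ⟨by omega, by omega⟩⟩

@[simp]
theorem coe_neg (m : Iodd n) : (neg m : ℤ) = -m := rfl

@[simp]
theorem neg_neg (m : Iodd n) : neg (neg m) = m := Subtype.ext (_root_.neg_neg (m : ℤ))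

variable (n)

def blockEquiv : Iodd n × ℤ ≃ ℤ where
  toFun p := p.1 + p.2 * (2 * n + 1)
  invFun i :=
    (⟨(i + n) % (2 * n + 1) - n, by
      have h₀ := Int.emod_nonneg (i + n) (by omega : (2 * n + 1 : ℤ) ≠ 0)
      have h₁ := Int.emod_lt_of_pos (i + n) (by omega : (0 : ℤ) < 2 * n + 1)
      exact mem_iff.mpr ⟨by omega, by omega⟩⟩,
     (i + n) / (2 * n + 1))
  left_inv := by
    rintro ⟨⟨m, hm⟩, r⟩
    have hm' := mem_iff.mp hm
    have hT : (2 * n + 1 : ℤ) ≠ 0 := by omega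
    have hrem : (m + n) % (2 * n + 1) = m + n := Int.emod_eq_of_lt (by omega) (by omega)
    have hquot : (m + n) / (2 * n + 1) = 0 := Int.ediv_eq_zero_of_lt (by omega) (by omega)
    have hsplit : m + r * (2 * n + 1) + n = m + n + r * (2 * n + 1) := by ring
    simp only [Prod.mk.injEq, Subtype.mk.injEq, hsplit, Int.add_mul_emod_self_right, hrem,
      Int.add_mul_ediv_right _ _ hT, hquot]
    omega
  right_inv i := by
    have := Int.mul_ediv_add_emod (i + n) (2 * n + 1)
    dsimp only
    linarith

theorem blockEquiv_apply (m : Iodd n) (r : ℤ) :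
    blockEquiv n (m, r) = m + r * (2 * n + 1) := rfl

theorem neg_blockEquiv (m : Iodd n) (r : ℤ) :
    -blockEquiv n (m, r) = blockEquiv n (neg m, -r) := by
  simp only [blockEquiv_apply, coe_neg]
  ring

theorem abs_sub_le_abs_blockEquiv_sub (m m' : Iodd n) (r s : ℤ) :
    |r - s| ≤ |blockEquiv n (m, r) - blockEquiv n (m', s)| := by
  have hm := mem_iff.mp m.2
  have hm' := mem_iff.mp m'.2
  rw [blockEquiv_apply, blockEquiv_apply]
  rcases abs_cases (r - s) with ⟨h, _⟩ | ⟨h, _⟩ <;>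
  rcases abs_cases ((m : ℤ) + r * (2 * n + 1) - (m' + s * (2 * n + 1))) with ⟨h', _⟩ | ⟨h', _⟩ <;>
  nlinarith

theorem abs_blockEquiv_sub_le (m m' : Iodd n) (r s : ℤ) :
    |blockEquiv n (m, r) - blockEquiv n (m', s)| ≤ 2 * n + |r - s| * (2 * n + 1) := by
  have hm := mem_iff.mp m.2
  have hm' := mem_iff.mp m'.2
  rw [blockEquiv_apply, blockEquiv_apply]
  rcases abs_cases (r - s) with ⟨h, _⟩ | ⟨h, _⟩ <;>
  rcases abs_cases ((m : ℤ) + r * (2 * n + 1) - (m' + s * (2 * n + 1))) with ⟨h', _⟩ | ⟨h', _⟩ <;>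
  nlinarith

end Iodd

section FeiginTsygan

variable {R : Type*} (n : ℕ)

theorem PhiOdd_apply (X : ℤ → ℤ → R) (m m' : Iodd n) (r s : ℤ) :
    PhiOdd n X m m' r s = X (Iodd.blockEquiv n (m, r)) (Iodd.blockEquiv n (m', s)) := rfl

def PhiOddInv (A : Iodd n → Iodd n → ℤ → ℤ → R) : ℤ → ℤ → R := fun i j =>
  A ((Iodd.blockEquiv n).symm i).1 ((Iodd.blockEquiv n).symm j).1
    ((Iodd.blockEquiv n).symm i).2 ((Iodd.blockEquiv n).symm j).2

theorem PhiOdd_PhiOddInv (A : Iodd n → Iodd n → ℤ → ℤ → R) : PhiOdd n (PhiOddInv n A) = A := by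
  funext m m' r s
  simp only [PhiOdd_apply, PhiOddInv, Equiv.symm_apply_apply]

theorem PhiOddInv_PhiOdd (X : ℤ → ℤ → R) : PhiOddInv n (PhiOdd n X) = X := by
  funext i j
  simp only [PhiOddInv, PhiOdd_apply, Prod.mk.eta, Equiv.apply_symm_apply]

theorem PhiOdd_injective : Function.Injective (PhiOdd (R := R) n) :=
  Function.LeftInverse.injective (PhiOddInv_PhiOdd n)

variable {n}

theorem HasBand.PhiOdd [Zero R] {X : ℤ → ℤ → R} {N : ℤ} (hX : HasBand X N) (m m' : Iodd n) :
    HasBand (PhiOdd n X m m') N :=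
  fun r s hrs => hX _ _ (hrs.trans_le (Iodd.abs_sub_le_abs_blockEquiv_sub n m m' r s))

theorem HasBand.PhiOddInv [Zero R] {A : Iodd n → Iodd n → ℤ → ℤ → R} {N : ℤ}
    (hA : ∀ m m', HasBand (A m m') N) : HasBand (PhiOddInv n A) (2 * n + N * (2 * n + 1)) := by
  intro i j hij
  set p := (Iodd.blockEquiv n).symm i
  set q := (Iodd.blockEquiv n).symm j
  have hbound := Iodd.abs_blockEquiv_sub_le n p.1 q.1 p.2 q.2
  simp only [Prod.mk.eta, p, q, Equiv.apply_symm_apply] at hbound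
  refine hA p.1 q.1 p.2 q.2 (lt_of_mul_lt_mul_right (a := 2 * (n : ℤ) + 1) ?_ (by positivity))
  linarith

theorem PhiOdd_jmul [Ring R] {X : ℤ → ℤ → R} (hX : IsJacobi X) (Y : ℤ → ℤ → R) :
    PhiOdd n (jmul X Y) = matMulOdd n (PhiOdd n X) (PhiOdd n Y) := by
  funext m m' r s
  simp only [PhiOdd_apply, jmul, matMulOdd, Finset.sum_apply]
  rw [finsum_eq_sum_finsum_of_equiv (Iodd.blockEquiv n) _ (hX.finite_support_mul _ _)]

theorem PhiOdd_lieB [Ring R] {X Y : ℤ → ℤ → R} (hX : IsJacobi X) (hY : IsJacobi Y) :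
    PhiOdd n (lieB X Y) =
      matMulOdd n (PhiOdd n X) (PhiOdd n Y) - matMulOdd n (PhiOdd n Y) (PhiOdd n X) := by
  rw [← PhiOdd_jmul hX, ← PhiOdd_jmul hY]
  rfl

theorem matMulOdd_JnB [Ring R] (A : Iodd n → Iodd n → ℤ → ℤ → R) (m m' : Iodd n) :
    matMulOdd n A (JnB n) m m' = A m (Iodd.neg m') := by
  rw [matMulOdd, Finset.sum_eq_single (Iodd.neg m')]
  · simp [JnB]
  · intro p _ hp
    rw [JnB, if_neg fun h => hp (Subtype.ext (by simp [h])), jmul_zero]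
  · simp

theorem JnB_matMulOdd [Ring R] (A : Iodd n → Iodd n → ℤ → ℤ → R) (m m' : Iodd n) :
    matMulOdd n (JnB n) A m m' = A (Iodd.neg m) m' := by
  rw [matMulOdd, Finset.sum_eq_single (Iodd.neg m)]
  · simp [JnB]
  · intro p _ hp
    rw [JnB, if_neg fun h => hp (Subtype.ext (by simp [h])), zero_jmul]
  · simp

theorem daggerOdd_PhiOdd (bar : R → R) (X : ℤ → ℤ → R) (m m' : Iodd n) :
    daggerOdd bar n (PhiOdd n X) m m' = PhiOdd n (tau0s bar X) (Iodd.neg m) (Iodd.neg m') := by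
  funext r s
  simp only [daggerOdd, astar, tau0s, PhiOdd_apply, Iodd.neg_blockEquiv, Iodd.neg_neg]

theorem tau0s_eq_neg_iff [Ring R] (bar : R → R) (X : ℤ → ℤ → R) :
    tau0s bar X = -X ↔
      matMulOdd n (daggerOdd bar n (PhiOdd n X)) (JnB n) +
        matMulOdd n (JnB n) (PhiOdd n X) = 0 := by
  have hdefect : matMulOdd n (daggerOdd bar n (PhiOdd n X)) (JnB n) +
      matMulOdd n (JnB n) (PhiOdd n X) = fun m => PhiOdd n (tau0s bar X + X) (Iodd.neg m) := by
    funext m m'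
    rw [Pi.add_apply, Pi.add_apply, matMulOdd_JnB, JnB_matMulOdd, daggerOdd_PhiOdd, Iodd.neg_neg]
    rfl
  rw [hdefect, eq_neg_iff_add_eq_zero, ← (PhiOdd_injective n).eq_iff' rfl]
  constructor
  · intro h
    rw [h]
    rfl
  · intro h
    funext m
    have hm := congrFun h (Iodd.neg m)
    rw [Iodd.neg_neg] at hm
    exact hm

end FeiginTsygan

theorem statement6_general (k R : Type*) [Field k] [Ring R] [Algebra k R]
    (bar : R →ₗ[k] R) (n : ℕ) :
    -- well-definedness: entries of `Φ(X)` lie in `J(R)`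
    (∀ X : ℤ → ℤ → R, IsJacobi X →
      ∀ m m' : {i : ℤ // i ∈ Iodd n}, IsJacobi (PhiOdd n X m m')) ∧
    -- `Φ` maps `o_J^{odd}(R)` exactly onto `o_{2n+1}(J(R))`
    (∀ X : ℤ → ℤ → R, IsJacobi X →
      (tau0s (⇑bar) X = -X ↔
        matMulOdd n (daggerOdd (⇑bar) n (PhiOdd n X)) (JnB n) +
          matMulOdd n (JnB n) (PhiOdd n X) = 0)) ∧
    -- `Φ` is a homomorphism of Lie algebras
    (∀ X Y : ℤ → ℤ → R, IsJacobi X → IsJacobi Y →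
      PhiOdd n (lieB X Y) =
        matMulOdd n (PhiOdd n X) (PhiOdd n Y) - matMulOdd n (PhiOdd n Y) (PhiOdd n X)) ∧
    -- injectivity on `o_J^{odd}(R)`
    (∀ X Y : ℤ → ℤ → R, IsJacobi X → IsJacobi Y → tau0s (⇑bar) X = -X →
      tau0s (⇑bar) Y = -Y → PhiOdd n X = PhiOdd n Y → X = Y) ∧
    -- surjectivity onto `o_{2n+1}(J(R))`
    (∀ A : {i : ℤ // i ∈ Iodd n} → {i : ℤ // i ∈ Iodd n} → ℤ → ℤ → R,
      (∀ m m', IsJacobi (A m m')) →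
      matMulOdd n (daggerOdd (⇑bar) n A) (JnB n) + matMulOdd n (JnB n) A = 0 →
      ∃ X : ℤ → ℤ → R, IsJacobi X ∧ tau0s (⇑bar) X = -X ∧ PhiOdd n X = A) := by
  refine ⟨fun X hX m m' => ?_, fun X _ => tau0s_eq_neg_iff _ X,
    fun X Y hX hY => PhiOdd_lieB hX hY, fun X Y _ _ _ _ h => PhiOdd_injective n h,
    fun A hA hA0 => ?_⟩
  · obtain ⟨N, hN⟩ := hX
    exact ⟨N, hN.PhiOdd m m'⟩
  · obtain ⟨N, hN⟩ := exists_hasBand_of_isJacobi A hA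
    refine ⟨PhiOddInv n A, ⟨_, HasBand.PhiOddInv hN⟩, ?_, PhiOdd_PhiOddInv n A⟩
    rwa [tau0s_eq_neg_iff, PhiOdd_PhiOddInv]

theorem statement6 (k R : Type*) [Field k] [CharZero k] [Ring R] [Algebra k R]
    (bar : R →ₗ[k] R) (hbar_mul : ∀ r s : R, bar (r * s) = bar s * bar r)
    (hbar_inv : ∀ r : R, bar (bar r) = r) (n : ℕ) (hn : 1 < n) :
    -- well-definedness: entries of `Φ(X)` lie in `J(R)`
    (∀ X : ℤ → ℤ → R, IsJacobi X →
      ∀ m m' : {i : ℤ // i ∈ Iodd n}, IsJacobi (PhiOdd n X m m')) ∧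
    -- `Φ` maps `o_J^{odd}(R)` exactly onto `o_{2n+1}(J(R))`
    (∀ X : ℤ → ℤ → R, IsJacobi X →
      (tau0s (⇑bar) X = -X ↔
        matMulOdd n (daggerOdd (⇑bar) n (PhiOdd n X)) (JnB n) +
          matMulOdd n (JnB n) (PhiOdd n X) = 0)) ∧
    -- `Φ` is a homomorphism of Lie algebras
    (∀ X Y : ℤ → ℤ → R, IsJacobi X → IsJacobi Y →
      PhiOdd n (lieB X Y) =
        matMulOdd n (PhiOdd n X) (PhiOdd n Y) - matMulOdd n (PhiOdd n Y) (PhiOdd n X)) ∧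
    -- injectivity on `o_J^{odd}(R)`
    (∀ X Y : ℤ → ℤ → R, IsJacobi X → IsJacobi Y → tau0s (⇑bar) X = -X →
      tau0s (⇑bar) Y = -Y → PhiOdd n X = PhiOdd n Y → X = Y) ∧
    -- surjectivity onto `o_{2n+1}(J(R))`
    (∀ A : {i : ℤ // i ∈ Iodd n} → {i : ℤ // i ∈ Iodd n} → ℤ → ℤ → R,
      (∀ m m', IsJacobi (A m m')) →
      matMulOdd n (daggerOdd (⇑bar) n A) (JnB n) + matMulOdd n (JnB n) A = 0 →
      ∃ X : ℤ → ℤ → R, IsJacobi X ∧ tau0s (⇑bar) X = -X ∧ PhiOdd n X = A) :=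
  statement6_general k R bar n
end

section
/- Let n ≥ 0 and let x, y be the k-linear endomorphisms of the (n+1)-fold tensor power R^{⊗(n+1)} (tensor product over k) determined on pure tensors by x(r_0⊗r_1⊗⋯⊗r_n) = (−1)^n r_n⊗r_0⊗r_1⊗⋯⊗r_{n−1} and y(r_0⊗r_1⊗⋯⊗r_n) = (−1)^{n(n+1)/2} r̄_0⊗r̄_n⊗r̄_{n−1}⊗⋯⊗r̄_1. Then x^{n+1} = id, y² = id, and y∘x∘y = x^{−1} (equivalently x∘y∘x = y), so x and y define an action of the dihedral group D_{n+1} = ⟨x,y | x^{n+1} = y² = 1, yxy = x^{−1}⟩ on R^{⊗(n+1)}. -/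
open scoped TensorProduct

/-!
Every operator in sight acts on a pure tensor `⨂ r_i` by a sign, a reindexing of the factors and
a map applied to each factor, and composing such operators multiplies the signs and composes the
reindexings and factor maps. So each dihedral relation reduces to three checks: an identity of
signs, which are powers of `-1`; an identity of maps `Fin (n + 1) → Fin (n + 1)` built from
`i ↦ i - 1` and `i ↦ -i`; and `bar ∘ bar = id`.
-/

theorem neg_one_pow_pow_self {M : Type*} [Monoid M] [HasDistribNeg M] (n : ℕ) :
    ((-1 : M) ^ n) ^ n = (-1) ^ n := by
  rw [← pow_mul]
  rcases n.even_or_odd with hn | hn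
  · rw [hn.neg_one_pow, (hn.mul_left n).neg_one_pow]
  · rw [hn.neg_one_pow, (hn.mul hn).neg_one_pow]

theorem sub_right_iterate {G : Type*} [AddGroup G] (a : G) (m : ℕ) :
    (· - a)^[m] = (· - m • a) := by
  simp only [sub_eq_add_neg, ← neg_nsmul]
  exact add_right_iterate (-a) m

namespace Fin

theorem succ_nsmul_one_self (n : ℕ) : (n + 1) • (1 : Fin (n + 1)) = 0 := by
  simpa using card_nsmul_eq_zero (x := (1 : Fin (n + 1)))

theorem sub_one_iterate_succ_self (n : ℕ) : (fun i : Fin (n + 1) => i - 1)^[n + 1] = id := by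
  rw [sub_right_iterate, succ_nsmul_one_self]
  exact funext sub_zero

theorem sub_one_iterate_self (n : ℕ) : (fun i : Fin (n + 1) => i - 1)^[n] = (· + 1) := by
  have hn : n • (1 : Fin (n + 1)) = -1 :=
    eq_neg_of_add_eq_zero_left (by rw [← succ_nsmul, succ_nsmul_one_self])
  rw [sub_right_iterate, hn]
  exact funext fun i => sub_neg_eq_add i 1

end Fin

namespace PiTensorProduct

variable {k ι R : Type*} [CommSemiring k] [AddCommMonoid R] [Module k R]

def ActsOnTprodBy (x : Module.End k (⨂[k] _ : ι, R)) (c : k) (σ : ι → ι) (f : R → R) : Prop :=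
  ∀ r : ι → R, x (tprod k r) = c • tprod k (fun i => f (r (σ i)))

namespace ActsOnTprodBy

variable {x y : Module.End k (⨂[k] _ : ι, R)} {c d : k} {σ τ : ι → ι} {f g : R → R}

theorem one : ActsOnTprodBy (1 : Module.End k (⨂[k] _ : ι, R)) 1 id id := fun r => by
  simp

theorem mul (hy : ActsOnTprodBy y d τ g) (hx : ActsOnTprodBy x c σ f) :
    ActsOnTprodBy (y * x) (d * c) (σ ∘ τ) (g ∘ f) := fun r => by
  rw [Module.End.mul_apply, hx, map_smul, hy, smul_smul, mul_comm]
  rfl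

theorem pow (hx : ActsOnTprodBy x c σ f) (m : ℕ) : ActsOnTprodBy (x ^ m) (c ^ m) σ^[m] f^[m] := by
  induction m with
  | zero =>
    rw [pow_zero, pow_zero]
    exact one
  | succ m ih =>
    rw [pow_succ, pow_succ, Function.iterate_succ', Function.iterate_succ]
    exact ih.mul hx

theorem unique (hx : ActsOnTprodBy x c σ f) (hy : ActsOnTprodBy y c σ f) : x = y :=
  ext <| MultilinearMap.ext fun r => by
    simp only [LinearMap.compMultilinearMap_apply, hx r, hy r]

end ActsOnTprodBy

end PiTensorProduct

open PiTensorProduct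

theorem statement9_general (k R : Type*) [Field k] [Ring R] [Algebra k R]
    (bar : R →ₗ[k] R)
    (hbar_inv : ∀ r : R, bar (bar r) = r) (n : ℕ)
    (x y : Module.End k (⨂[k] _ : Fin (n + 1), R))
    -- `x(r_0⊗r_1⊗⋯⊗r_n) = (−1)^n r_n⊗r_0⊗r_1⊗⋯⊗r_{n−1}`
    (hx : ∀ r : Fin (n + 1) → R,
      x (PiTensorProduct.tprod k r) =
        ((-1 : k) ^ n) • PiTensorProduct.tprod k (fun i => r (i - 1)))
    -- `y(r_0⊗r_1⊗⋯⊗r_n) = (−1)^{n(n+1)/2} r̄_0⊗r̄_n⊗r̄_{n−1}⊗⋯⊗r̄_1`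
    (hy : ∀ r : Fin (n + 1) → R,
      y (PiTensorProduct.tprod k r) =
        ((-1 : k) ^ (n * (n + 1) / 2)) • PiTensorProduct.tprod k (fun i => bar (r (-i)))) :
    x ^ (n + 1) = 1 ∧ y * y = 1 ∧ y * x * y = x ^ n ∧ x * y * x = y := by
  have hx' : ActsOnTprodBy x ((-1) ^ n) (· - 1) id := hx
  have hy' : ActsOnTprodBy y ((-1) ^ (n * (n + 1) / 2)) Neg.neg bar := hy
  have hsq (m : ℕ) : (-1 : k) ^ m * (-1) ^ m = 1 := pow_mul_pow_eq_one m (by simp)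
  have hbar : ⇑bar ∘ ⇑bar = id := funext hbar_inv
  refine ⟨?_, ?_, ?_, ?_⟩
  · refine (hx'.pow (n + 1)).unique ?_
    convert ActsOnTprodBy.one using 1
    · rw [← pow_mul, (Nat.even_mul_succ_self n).neg_one_pow]
    · exact Fin.sub_one_iterate_succ_self n
    · exact Function.iterate_id _
  · refine (hy'.mul hy').unique ?_
    convert ActsOnTprodBy.one using 1
    · exact hsq _
    · exact neg_involutive.comp_self
  · refine ((hy'.mul hx').mul hy').unique ?_
    convert hx'.pow n using 1
    · rw [mul_right_comm, hsq, one_mul, neg_one_pow_pow_self]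
    · rw [Fin.sub_one_iterate_self]
      funext i
      simp only [Function.comp_apply, neg_sub, sub_neg_eq_add, add_comm]
    · rw [Function.comp_id, hbar, Function.iterate_id]
  · refine ((hx'.mul hy').mul hx').unique ?_
    convert hy' using 1
    · rw [mul_right_comm, hsq, one_mul]
    · funext i
      simp only [Function.comp_apply, neg_sub, sub_sub_cancel_left]
    · rfl

theorem statement9 (k R : Type*) [Field k] [CharZero k] [Ring R] [Algebra k R]
    (bar : R →ₗ[k] R) (hbar_mul : ∀ r s : R, bar (r * s) = bar s * bar r)
    (hbar_inv : ∀ r : R, bar (bar r) = r) (n : ℕ)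
    (x y : Module.End k (⨂[k] _ : Fin (n + 1), R))
    -- `x(r_0⊗r_1⊗⋯⊗r_n) = (−1)^n r_n⊗r_0⊗r_1⊗⋯⊗r_{n−1}`
    (hx : ∀ r : Fin (n + 1) → R,
      x (PiTensorProduct.tprod k r) =
        ((-1 : k) ^ n) • PiTensorProduct.tprod k (fun i => r (i - 1)))
    -- `y(r_0⊗r_1⊗⋯⊗r_n) = (−1)^{n(n+1)/2} r̄_0⊗r̄_n⊗r̄_{n−1}⊗⋯⊗r̄_1`
    (hy : ∀ r : Fin (n + 1) → R,
      y (PiTensorProduct.tprod k r) =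
        ((-1 : k) ^ (n * (n + 1) / 2)) • PiTensorProduct.tprod k (fun i => bar (r (-i)))) :
    x ^ (n + 1) = 1 ∧ y * y = 1 ∧ y * x * y = x ^ n ∧ x * y * x = y :=
  statement9_general k R bar hbar_inv n x y hx hy
end

section
/- Let p ≥ 0. Let ∗ be the anti-involution of J(R) with E_{k,l}(r)^∗ = E_{−l,−k}(r̄), let N = Σ_{i∈ℤ} E_{i,i+1}(1) ∈ J(R) and I the identity matrix, and let Φ̃_p : R^{⊗(p+1)} → J(R)^{⊗(p+2)} be the k-linear map determined on pure tensors by Φ̃_p(r_0⊗r_1⊗⋯⊗r_p) = r_0 I ⊗ ( Σ_{l=0}^{p} (−1)^l r_1 I⊗⋯⊗r_l I⊗N⊗r_{l+1} I⊗⋯⊗r_p I ). Let y_p^R be the operator on R^{⊗(p+1)} given by y_p^R(r_0⊗⋯⊗r_p) = (−1)^{p(p+1)/2} r̄_0⊗r̄_p⊗r̄_{p−1}⊗⋯⊗r̄_1, and let y_{p+1}^{J(R)} be the operator on J(R)^{⊗(p+2)} given by y_{p+1}^{J(R)}(m_0⊗⋯⊗m_{p+1}) = (−1)^{(p+1)(p+2)/2}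 m_0^∗⊗m_{p+1}^∗⊗m_p^∗⊗⋯⊗m_1^∗. Then y_{p+1}^{J(R)} ∘ Φ̃_p = −Φ̃_p ∘ y_p^R. -/
open scoped TensorProduct

/-- `J(R)` as a `k`-submodule of the space of all ℤ×ℤ matrices over `R`. -/
def jacobiSubmodule (k R : Type*) [Field k] [Ring R] [Algebra k R] :
    Submodule k (ℤ → ℤ → R) where
  carrier := {A | IsJacobi A}
  add_mem' := by
    rintro A B ⟨N, hN⟩ ⟨M, hM⟩
    exact ⟨max N M, fun i j h => by
      have : A i j + B i j = 0 := by
        rw [hN i j ((le_max_left N M).trans_lt h), hM i j ((le_max_right N M).trans_lt h),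
          add_zero]
      simpa using this⟩
  zero_mem' := ⟨0, fun i j _ => rfl⟩
  smul_mem' := by
    rintro c A ⟨N, hN⟩
    exact ⟨N, fun i j h => by
      have : c • A i j = 0 := by rw [hN i j h, smul_zero]
      simpa using this⟩

/-- The elements of `J(R)`. -/
abbrev JMat (k R : Type*) [Field k] [Ring R] [Algebra k R] : Type _ :=
  ↥(jacobiSubmodule k R)

/-- The diagonal matrix `r I ∈ J(R)`. -/
def diagJ (k : Type*) {R : Type*} [Field k] [Ring R] [Algebra k R] (r : R) : JMat k R :=
  ⟨fun i j => if i = j then r else 0, ⟨0, fun i j h => by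
    have hij : i ≠ j := by
      intro hij
      subst hij
      simp at h
    simp [hij]⟩⟩

/-- The matrix `N = Σ_{i∈ℤ} E_{i,i+1}(1) ∈ J(R)`. -/
def NmatJ (k : Type*) {R : Type*} [Field k] [Ring R] [Algebra k R] : JMat k R :=
  ⟨fun i j => if j = i + 1 then 1 else 0, ⟨1, fun i j h => by
    have hij : j ≠ i + 1 := by
      intro hij
      subst hij
      have : i - (i + 1) = -1 := by ring
      rw [this] at h
      simp at h
    simp [hij]⟩⟩

/-- The anti-involution `∗` of `J(R)`: `(X^∗)_{i,j} = bar (X_{−j,−i})`. -/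
def starJ (k : Type*) {R : Type*} [Field k] [Ring R] [Algebra k R]
    (bar : R →ₗ[k] R) (X : JMat k R) : JMat k R :=
  ⟨fun i j => bar (X.1 (-j) (-i)), by
    obtain ⟨N, hN⟩ := X.2
    exact ⟨N, fun i j h => by
      show bar (X.1 (-j) (-i)) = 0
      have hji : (-j) - (-i) = i - j := by ring
      rw [hN (-j) (-i) (by rw [hji]; exact h), map_zero]⟩⟩

/-- The `l`-th pure tensor appearing in the definition of `Φ̃_p`:
`r_0 I ⊗ r_1 I ⊗ ⋯ ⊗ r_l I ⊗ N ⊗ r_{l+1} I ⊗ ⋯ ⊗ r_p I`. -/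
def gfam (k : Type*) {R : Type*} [Field k] [Ring R] [Algebra k R] (p : ℕ)
    (r : ℕ → R) (l : ℕ) : Fin (p + 2) → JMat k R :=
  fun i =>
    if (i : ℕ) = 0 then diagJ k (r 0)
    else if (i : ℕ) ≤ l then diagJ k (r i)
    else if (i : ℕ) = l + 1 then NmatJ k
    else diagJ k (r ((i : ℕ) - 1))

/-!
Applying `∗` factorwise and reversing the factors `1, …, p + 1` turns the `l`-th summand
`r_0 I ⊗ ⋯ ⊗ N ⊗ ⋯ ⊗ r_p I` of `Φ̃_p(r_0⊗⋯⊗r_p)` into the `(p - l)`-th summand of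
`Φ̃_p(r̄_0⊗r̄_p⊗⋯⊗r̄_1)`, because `(r I)^∗ = r̄ I` and `N^∗ = N` (as `1̄ = 1`). After reindexing
`l ↦ p - l`, the coefficients `(−1)^{(p+1)(p+2)/2} (−1)^{p-l}` and `(−1)^{p(p+1)/2} (−1)^l` differ
by the factor `(−1)^{p+1+(p-l)-l} = −1`.
-/

open Fin.NatCast PiTensorProduct

theorem Fin.natCast_eq_neg_natCast {n a b : ℕ} [NeZero n] (h : a + b = n) :
    (a : Fin n) = -(b : Fin n) :=
  eq_neg_of_add_eq_zero_left (by rw [← Nat.cast_add, h, Fin.natCast_self])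

theorem neg_one_pow_triangle_succ_mul {S : Type*} [Ring S] {p l : ℕ} (hl : l ≤ p) :
    (-1 : S) ^ ((p + 1) * (p + 2) / 2) * (-1) ^ (p - l) =
      -(-1) ^ (p * (p + 1) / 2) * (-1) ^ l := by
  have htri : (p + 1) * (p + 2) / 2 = p * (p + 1) / 2 + (p + 1) := by
    rw [show (p + 1) * (p + 2) = p * (p + 1) + (p + 1) * 2 by ring,
      Nat.add_mul_div_right _ _ two_pos]
  rw [htri, ← pow_add, show p * (p + 1) / 2 + (p + 1) + (p - l) =
    p * (p + 1) / 2 + l + 1 + 2 * (p - l) by omega]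
  simp [pow_add, pow_mul]

theorem sum_range_reflect_neg_one_pow_smul {S M : Type*} [Ring S] [AddCommMonoid M] [Module S M]
    (p : ℕ) (f : ℕ → M) :
    ∑ l ∈ Finset.range (p + 1), ((-1 : S) ^ ((p + 1) * (p + 2) / 2) * (-1) ^ l) • f (p - l) =
      (-(-1 : S) ^ (p * (p + 1) / 2)) • ∑ l ∈ Finset.range (p + 1), (-1 : S) ^ l • f l := by
  rw [← Finset.sum_range_reflect, Finset.smul_sum]
  refine Finset.sum_congr rfl fun l hl => ?_
  have hl : l ≤ p := Finset.mem_range_succ_iff.mp hl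
  rw [Nat.add_sub_cancel, Nat.sub_sub_self hl, neg_one_pow_triangle_succ_mul hl, smul_smul]

section Jacobi

variable {k R : Type*} [Field k] [Ring R] [Algebra k R] (bar : R →ₗ[k] R)

theorem starJ_diagJ (r : R) : starJ k bar (diagJ k r) = diagJ k (bar r) := by
  refine Subtype.ext (funext₂ fun i j => ?_)
  show bar (if -j = -i then r else 0) = if i = j then bar r else 0
  by_cases h : i = j
  · simp [h]
  · rw [if_neg (by omega), if_neg h, map_zero]

theorem starJ_NmatJ (h1 : bar 1 = 1) : starJ k bar (NmatJ k : JMat k R) = NmatJ k := by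
  refine Subtype.ext (funext₂ fun i j => ?_)
  show bar (if -i = -j + 1 then (1 : R) else 0) = if j = i + 1 then 1 else 0
  by_cases h : j = i + 1
  · rw [if_pos (by omega), if_pos h, h1]
  · rw [if_neg (by omega), if_neg h, map_zero]

theorem starJ_gfam_neg (h1 : bar 1 = 1) {p l : ℕ} (hl : l ≤ p) (r : Fin (p + 1) → R)
    (i : Fin (p + 2)) :
    starJ k bar (gfam k p (fun n => r n) l (-i)) =
      gfam k p (fun n => bar (r (-n))) (p - l) i := by
  rcases eq_or_ne i 0 with rfl | hi
  · simp [gfam, starJ_diagJ]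
  · have hneg : ((-i : Fin (p + 2)) : ℕ) = p + 2 - i := by
      rw [Fin.val_neg', Nat.mod_eq_of_lt (by have := Fin.pos_iff_ne_zero.mpr hi; omega)]
    have hi0 : (i : ℕ) ≠ 0 := Fin.val_ne_of_ne hi
    have hip := i.isLt
    simp only [gfam, hneg]
    split_ifs <;>
      first
      | omega
      | exact starJ_NmatJ bar h1
      | (rw [starJ_diagJ]
         exact congrArg (diagJ k ∘ bar ∘ r) (Fin.natCast_eq_neg_natCast (by omega)))

end Jacobi

theorem statement10_general (k R : Type*) [Field k] [Ring R] [Algebra k R]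
    (bar : R →ₗ[k] R) (hbar_mul : ∀ r s : R, bar (r * s) = bar s * bar r)
    (hbar_inv : ∀ r : R, bar (bar r) = r) (p : ℕ)
    (Φ : (⨂[k] _ : Fin (p + 1), R) →ₗ[k] (⨂[k] _ : Fin (p + 2), JMat k R))
    -- `Φ̃_p(r_0⊗⋯⊗r_p) = r_0 I ⊗ (Σ_{l=0}^p (−1)^l r_1 I⊗⋯⊗r_l I⊗N⊗r_{l+1} I⊗⋯⊗r_p I)`
    (hΦ : ∀ r : ℕ → R,
      Φ (PiTensorProduct.tprod k fun i : Fin (p + 1) => r i) =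
        ∑ l ∈ Finset.range (p + 1),
          ((-1 : k) ^ l) • PiTensorProduct.tprod k (gfam k p r l))
    (yR : Module.End k (⨂[k] _ : Fin (p + 1), R))
    -- `y_p^R(r_0⊗⋯⊗r_p) = (−1)^{p(p+1)/2} r̄_0⊗r̄_p⊗⋯⊗r̄_1`
    (hyR : ∀ r : Fin (p + 1) → R,
      yR (PiTensorProduct.tprod k r) =
        ((-1 : k) ^ (p * (p + 1) / 2)) • PiTensorProduct.tprod k (fun i => bar (r (-i))))
    (yJ : Module.End k (⨂[k] _ : Fin (p + 2), JMat k R))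
    -- `y_{p+1}^{J(R)}(m_0⊗⋯⊗m_{p+1}) = (−1)^{(p+1)(p+2)/2} m_0^∗⊗m_{p+1}^∗⊗⋯⊗m_1^∗`
    (hyJ : ∀ m : Fin (p + 2) → JMat k R,
      yJ (PiTensorProduct.tprod k m) =
        ((-1 : k) ^ ((p + 1) * (p + 2) / 2)) •
          PiTensorProduct.tprod k (fun i => starJ k bar (m (-i)))) :
    ∀ t : ⨂[k] _ : Fin (p + 1), R, yJ (Φ t) = -(Φ (yR t)) := by
  have hbar1 : bar 1 = 1 := by simpa [hbar_inv] using (hbar_mul (bar 1) 1).symm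
  have hΦ_tprod (r : Fin (p + 1) → R) : Φ (tprod k r) =
      ∑ l ∈ Finset.range (p + 1), (-1 : k) ^ l • tprod k (gfam k p (fun n => r n) l) := by
    simpa using hΦ fun n => r n
  suffices yJ ∘ₗ Φ + Φ ∘ₗ yR = 0 from
    fun t => eq_neg_of_add_eq_zero_left (LinearMap.congr_fun this t)
  refine PiTensorProduct.ext (MultilinearMap.ext fun r => ?_)
  rw [LinearMap.compMultilinearMap_apply, LinearMap.add_apply, LinearMap.comp_apply,
    LinearMap.comp_apply, LinearMap.zero_compMultilinearMap, zero_apply]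
  -- The additive group on `⨂` is a separate instance, not reducibly the one underlying `Φ`'s
  -- codomain, so negation lemmas need the type given explicitly.
  refine (add_eq_zero_iff_eq_neg (G := ⨂[k] _ : Fin (p + 2), JMat k R)).mpr ?_
  let r' : Fin (p + 1) → R := fun i => bar (r (-i))
  calc yJ (Φ (tprod k r))
      = ∑ l ∈ Finset.range (p + 1), ((-1 : k) ^ ((p + 1) * (p + 2) / 2) * (-1) ^ l) •
          tprod k (gfam k p (fun n => r' n) (p - l)) := by
        rw [hΦ_tprod, map_sum]
        refine Finset.sum_congr rfl fun l hl => ?_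
        rw [map_smul, hyJ, smul_smul, mul_comm]
        simp_rw [starJ_gfam_neg bar hbar1 (Finset.mem_range_succ_iff.mp hl)]
        rfl
    _ = (-(-1 : k) ^ (p * (p + 1) / 2)) • Φ (tprod k r') := by
        rw [hΦ_tprod]
        exact sum_range_reflect_neg_one_pow_smul p fun l => tprod k (gfam k p (fun n => r' n) l)
    _ = -(Φ (yR (tprod k r))) := by
        rw [hyR, map_smul]
        exact neg_smul (M := ⨂[k] _ : Fin (p + 2), JMat k R) _ _

theorem statement10 (k R : Type*) [Field k] [CharZero k] [Ring R] [Algebra k R]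
    (bar : R →ₗ[k] R) (hbar_mul : ∀ r s : R, bar (r * s) = bar s * bar r)
    (hbar_inv : ∀ r : R, bar (bar r) = r) (p : ℕ)
    (Φ : (⨂[k] _ : Fin (p + 1), R) →ₗ[k] (⨂[k] _ : Fin (p + 2), JMat k R))
    -- `Φ̃_p(r_0⊗⋯⊗r_p) = r_0 I ⊗ (Σ_{l=0}^p (−1)^l r_1 I⊗⋯⊗r_l I⊗N⊗r_{l+1} I⊗⋯⊗r_p I)`
    (hΦ : ∀ r : ℕ → R,
      Φ (PiTensorProduct.tprod k fun i : Fin (p + 1) => r i) =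
        ∑ l ∈ Finset.range (p + 1),
          ((-1 : k) ^ l) • PiTensorProduct.tprod k (gfam k p r l))
    (yR : Module.End k (⨂[k] _ : Fin (p + 1), R))
    -- `y_p^R(r_0⊗⋯⊗r_p) = (−1)^{p(p+1)/2} r̄_0⊗r̄_p⊗⋯⊗r̄_1`
    (hyR : ∀ r : Fin (p + 1) → R,
      yR (PiTensorProduct.tprod k r) =
        ((-1 : k) ^ (p * (p + 1) / 2)) • PiTensorProduct.tprod k (fun i => bar (r (-i))))
    (yJ : Module.End k (⨂[k] _ : Fin (p + 2), JMat k R))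
    -- `y_{p+1}^{J(R)}(m_0⊗⋯⊗m_{p+1}) = (−1)^{(p+1)(p+2)/2} m_0^∗⊗m_{p+1}^∗⊗⋯⊗m_1^∗`
    (hyJ : ∀ m : Fin (p + 2) → JMat k R,
      yJ (PiTensorProduct.tprod k m) =
        ((-1 : k) ^ ((p + 1) * (p + 2) / 2)) •
          PiTensorProduct.tprod k (fun i => starJ k bar (m (-i)))) :
    ∀ t : ⨂[k] _ : Fin (p + 1), R, yJ (Φ t) = -(Φ (yR t)) :=
  statement10_general k R bar hbar_mul hbar_inv p Φ hΦ yR hyR yJ hyJ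
end

section
/- Set I_+ = Σ_{i≥0} E_{i,i}(1), I_− = Σ_{i<0} E_{i,i}(1), and let Φ : J(R) → J(R) be the k-linear map Φ(X) = I_+ X I_+. For all X, Y ∈ J(R): (1) the matrix [Φ(X),Φ(Y)] − Φ([X,Y]) equals (I_+ Y I_−)(I_− X I_+) − (I_+ X I_−)(I_− Y I_+); (2) this matrix has finite support; hence (3) Ψ(X,Y) := Tr([Φ(X),Φ(Y)] − Φ([X,Y])) ∈ R^{ab} is well-defined, where Tr is the trace of a finite-support matrix followed by the projection R ↠ R^{ab} = R/[R,R]. -/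
def FinSupp {R : Type*} [Zero R] (A : ℤ → ℤ → R) : Prop :=
  (Function.support fun p : ℤ × ℤ => A p.1 p.2).Finite

/-- `I_+ = Σ_{i≥0} E_{i,i}(1)`. -/
def Iplus (R : Type*) [Zero R] [One R] : ℤ → ℤ → R :=
  fun i j => if i = j ∧ 0 ≤ i then 1 else 0

/-- `I_− = Σ_{i<0} E_{i,i}(1)`. -/
def Iminus (R : Type*) [Zero R] [One R] : ℤ → ℤ → R :=
  fun i j => if i = j ∧ i < 0 then 1 else 0

/-- `Φ(X) = I_+ X I_+`. -/
noncomputable def PhiPlus {R : Type*} [Ring R] (X : ℤ → ℤ → R) : ℤ → ℤ → R :=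
  jmul (jmul (Iplus R) X) (Iplus R)

/-- The `k`-span of the commutators `rs − sr` in `R`. -/
def commSpan (k R : Type*) [Field k] [Ring R] [Algebra k R] : Submodule k R :=
  Submodule.span k {x : R | ∃ r s : R, x = r * s - s * r}

abbrev Rab (k R : Type*) [Field k] [Ring R] [Algebra k R] : Type _ :=
  R ⧸ commSpan k R

/-- Trace of a finite-support matrix followed by `R ↠ R^{ab}`. -/
noncomputable def TrAb (k : Type*) {R : Type*} [Field k] [Ring R] [Algebra k R]
    (A : ℤ → ℤ → R) : Rab k R :=
  Submodule.Quotient.mk (∑ᶠ i : ℤ, A i i)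


section Aux
variable {R : Type*} [Ring R]

lemma jmul_apply (A B : ℤ → ℤ → R) (i j : ℤ) :
    jmul A B i j = ∑ᶠ l : ℤ, A i l * B l j := rfl

lemma IplusL (A : ℤ → ℤ → R) (i j : ℤ) :
    jmul (Iplus R) A i j = if 0 ≤ i then A i j else 0 := by
  unfold jmul
  rw [finsum_eq_single _ i (fun l hl => by simp [Iplus, Ne.symm hl])]
  by_cases h : 0 ≤ i <;> simp [Iplus, h]

lemma IplusR (A : ℤ → ℤ → R) (i j : ℤ) :
    jmul A (Iplus R) i j = if 0 ≤ j then A i j else 0 := by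
  unfold jmul
  rw [finsum_eq_single _ j (fun l hl => by simp [Iplus, hl])]
  by_cases h : 0 ≤ j <;> simp [Iplus, h]

lemma IminusR (A : ℤ → ℤ → R) (i j : ℤ) :
    jmul A (Iminus R) i j = if j < 0 then A i j else 0 := by
  unfold jmul
  rw [finsum_eq_single _ j (fun l hl => by simp [Iminus, hl])]
  by_cases h : j < 0 <;> simp [Iminus, h]

lemma phi_apply (A : ℤ → ℤ → R) (i j : ℤ) :
    PhiPlus A i j = if 0 ≤ i ∧ 0 ≤ j then A i j else 0 := by
  unfold PhiPlus
  rw [IplusR, IplusL]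
  by_cases hi : 0 ≤ i <;> by_cases hj : 0 ≤ j <;> simp [hi, hj]

lemma cornerL (A : ℤ → ℤ → R) (i j : ℤ) :
    jmul (jmul (Iplus R) A) (Iminus R) i j = if 0 ≤ i ∧ j < 0 then A i j else 0 := by
  rw [IminusR, IplusL]
  by_cases hi : 0 ≤ i <;> by_cases hj : j < 0 <;> simp [hi, hj]

lemma cornerR (A : ℤ → ℤ → R) (i j : ℤ) :
    jmul (jmul (Iminus R) A) (Iplus R) i j = if i < 0 ∧ 0 ≤ j then A i j else 0 := by
  rw [IplusR]
  have : jmul (Iminus R) A i j = if i < 0 then A i j else 0 := by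
    unfold jmul
    rw [finsum_eq_single _ i (fun l hl => by simp [Iminus, Ne.symm hl])]
    by_cases h : i < 0 <;> simp [Iminus, h]
  rw [this]
  by_cases hi : i < 0 <;> by_cases hj : 0 ≤ j <;> simp [hi, hj]

lemma jmul_phi (A B : ℤ → ℤ → R) (i j : ℤ) :
    jmul (PhiPlus A) (PhiPlus B) i j =
      if 0 ≤ i ∧ 0 ≤ j then ∑ᶠ l : ℤ, (if 0 ≤ l then A i l * B l j else 0) else 0 := by
  have h : ∀ l : ℤ, PhiPlus A i l * PhiPlus B l j =
      if 0 ≤ i ∧ 0 ≤ j then (if 0 ≤ l then A i l * B l j else 0) else 0 := by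
    intro l
    rw [phi_apply, phi_apply]
    by_cases hi : 0 ≤ i <;> by_cases hj : 0 ≤ j <;> by_cases hl : 0 ≤ l <;>
      simp [hi, hj, hl]
  refine Eq.trans (finsum_congr h) ?_
  by_cases hc : 0 ≤ i ∧ 0 ≤ j <;> simp [hc]

lemma jmul_corner (A B : ℤ → ℤ → R) (i j : ℤ) :
    jmul (jmul (jmul (Iplus R) A) (Iminus R)) (jmul (jmul (Iminus R) B) (Iplus R)) i j =
      if 0 ≤ i ∧ 0 ≤ j then ∑ᶠ l : ℤ, (if l < 0 then A i l * B l j else 0) else 0 := by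
  have h : ∀ l : ℤ, jmul (jmul (Iplus R) A) (Iminus R) i l *
      jmul (jmul (Iminus R) B) (Iplus R) l j =
      if 0 ≤ i ∧ 0 ≤ j then (if l < 0 then A i l * B l j else 0) else 0 := by
    intro l
    rw [cornerL, cornerR]
    by_cases hi : 0 ≤ i <;> by_cases hj : 0 ≤ j <;> by_cases hl : l < 0 <;>
      simp [hi, hj, hl]
  refine Eq.trans (finsum_congr h) ?_
  by_cases hc : 0 ≤ i ∧ 0 ≤ j <;> simp [hc]

lemma supp_fin_left {X : ℤ → ℤ → R} {N : ℤ} (hX : HasBand X N) (i : ℤ) (g : ℤ → R) :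
    (Function.support fun l => X i l * g l).Finite := by
  apply (Set.finite_Icc (i - N) (i + N)).subset
  intro l hl
  simp only [Function.mem_support] at hl
  by_contra hc
  simp only [Set.mem_Icc] at hc
  exact hl (by rw [hX i l (by rw [lt_abs]; omega), zero_mul])

lemma finsum_split (f : ℤ → R) (hf : (Function.support f).Finite) :
    ∑ᶠ l : ℤ, f l =
      (∑ᶠ l : ℤ, if 0 ≤ l then f l else 0) + ∑ᶠ l : ℤ, if l < 0 then f l else 0 := by
  have h1 : (Function.support fun l : ℤ => if 0 ≤ l then f l else 0).Finite :=
    hf.subset (by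
      intro l hl
      simp only [Function.mem_support] at hl ⊢
      exact fun h => hl (by simp [h]))
  have h2 : (Function.support fun l : ℤ => if l < 0 then f l else 0).Finite :=
    hf.subset (by
      intro l hl
      simp only [Function.mem_support] at hl ⊢
      exact fun h => hl (by simp [h]))
  rw [← finsum_add_distrib h1 h2]
  refine finsum_congr fun l => ?_
  by_cases h : 0 ≤ l
  · rw [if_pos h, if_neg (by omega)]; simp
  · rw [if_neg h, if_pos (by omega)]; simp

end Aux

theorem statement13 (k R : Type*) [Field k] [CharZero k] [Ring R] [Algebra k R]
    (X Y : ℤ → ℤ → R) (hX : IsJacobi X) (hY : IsJacobi Y) :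
    -- (1)
    lieB (PhiPlus X) (PhiPlus Y) - PhiPlus (lieB X Y) =
      jmul (jmul (jmul (Iplus R) Y) (Iminus R)) (jmul (jmul (Iminus R) X) (Iplus R)) -
        jmul (jmul (jmul (Iplus R) X) (Iminus R)) (jmul (jmul (Iminus R) Y) (Iplus R)) ∧
    -- (2)
    FinSupp (lieB (PhiPlus X) (PhiPlus Y) - PhiPlus (lieB X Y)) ∧
    -- (3) `Ψ(X,Y)` is well defined and given by the stated formula
    TrAb k (lieB (PhiPlus X) (PhiPlus Y) - PhiPlus (lieB X Y)) =
      TrAb k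
        (jmul (jmul (jmul (Iplus R) Y) (Iminus R)) (jmul (jmul (Iminus R) X) (Iplus R)) -
          jmul (jmul (jmul (Iplus R) X) (Iminus R)) (jmul (jmul (Iminus R) Y) (Iplus R))) := by
  obtain ⟨NX, hNX⟩ := hX
  obtain ⟨NY, hNY⟩ := hY
  set N := max NX NY with hNdef
  have hX' : HasBand X N := fun i j h => hNX i j ((le_max_left _ _).trans_lt h)
  have hY' : HasBand Y N := fun i j h => hNY i j ((le_max_right _ _).trans_lt h)
  have hfin : ∀ i j : ℤ, (Function.support fun l => X i l * Y l j).Finite :=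
    fun i j => supp_fin_left hX' i _
  have hfin' : ∀ i j : ℤ, (Function.support fun l => Y i l * X l j).Finite :=
    fun i j => supp_fin_left hY' i _
  have h1 : lieB (PhiPlus X) (PhiPlus Y) - PhiPlus (lieB X Y) =
      jmul (jmul (jmul (Iplus R) Y) (Iminus R)) (jmul (jmul (Iminus R) X) (Iplus R)) -
        jmul (jmul (jmul (Iplus R) X) (Iminus R)) (jmul (jmul (Iminus R) Y) (Iplus R)) := by
    funext i j
    simp only [lieB, Pi.sub_apply]
    rw [jmul_phi X Y i j, jmul_phi Y X i j, phi_apply, jmul_corner Y X i j,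
      jmul_corner X Y i j]
    by_cases h : 0 ≤ i ∧ 0 ≤ j
    · simp only [h, and_self, if_true, Pi.sub_apply]
      rw [jmul_apply X Y, jmul_apply Y X, finsum_split _ (hfin i j),
        finsum_split _ (hfin' i j)]
      abel
    · simp [h]
  refine ⟨h1, ?_, by rw [h1]⟩
  rw [FinSupp, h1]
  apply ((Set.finite_Icc (0 : ℤ) N).prod (Set.finite_Icc (0 : ℤ) N)).subset
  rintro ⟨i, j⟩ hp
  simp only [Function.mem_support, Pi.sub_apply] at hp
  rw [jmul_corner Y X i j, jmul_corner X Y i j] at hp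
  by_cases h : 0 ≤ i ∧ 0 ≤ j
  · simp only [h, and_self, if_true] at hp
    have hex : ∃ l : ℤ, (if l < 0 then Y i l * X l j else 0) ≠ 0 ∨
        (if l < 0 then X i l * Y l j else 0) ≠ 0 := by
      by_contra hc
      push_neg at hc
      apply hp
      rw [finsum_eq_zero_of_forall_eq_zero (fun l => (hc l).1),
        finsum_eq_zero_of_forall_eq_zero (fun l => (hc l).2), sub_self]
    obtain ⟨l, hl⟩ := hex
    have hl0 : l < 0 := by
      rcases hl with h' | h' <;>
        · by_contra hc
          rw [if_neg hc] at h'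
          exact h' rfl
    simp only [Set.mem_prod, Set.mem_Icc]
    rcases hl with h' | h'
    · rw [if_pos hl0] at h'
      have b1 : ¬ N < |i - l| := fun hh => left_ne_zero_of_mul h' (hY' i l hh)
      have b2 : ¬ N < |l - j| := fun hh => right_ne_zero_of_mul h' (hX' l j hh)
      rw [not_lt, abs_le] at b1 b2
      omega
    · rw [if_pos hl0] at h'
      have b1 : ¬ N < |i - l| := fun hh => left_ne_zero_of_mul h' (hX' i l hh)
      have b2 : ¬ N < |l - j| := fun hh => right_ne_zero_of_mul h' (hY' l j hh)
      rw [not_lt, abs_le] at b1 b2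
      omega
  · rw [if_neg h, if_neg h, sub_self] at hp
    exact (hp rfl).elim
end

section
/- Let n ≥ 3 and realize S_{2n} as the group of permutations of the 2n-element set {1,…,n} ⊔ {1^∗,…,n^∗}. Let θ be the involution exchanging i and i^∗ for every i, and let H_n be the centralizer of θ in S_{2n} (the hyperoctahedral group (ℤ/2ℤ)^n ⋊ S_n). Let κ be the n-cycle (1 2 ⋯ n) fixing every i^∗, let κ^∗ be the n-cycle (1^∗ 2^∗ ⋯ n^∗) fixing every i, and let ω_H be the permutation sending i ↦ n+1−i and i^∗ ↦ (n+1−i)^∗. Then the stabilizer in H_n of the left coset κH_n ∈ S_{2n}/H_n, namely H_n ∩ κH_nκ^{−1}, equals the subgroup generated by κκ^∗ and θω_H, and this subgroup is isomorphic to the dihedral group of order 2n. -/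
open scoped Pointwise

/-- The involution `θ` exchanging `i` and `i^∗`. -/
def theta (n : ℕ) : Equiv.Perm (Fin n ⊕ Fin n) := Equiv.sumComm (Fin n) (Fin n)

/-- The hyperoctahedral group `H_n = (ℤ/2ℤ)^n ⋊ S_n`, as the centralizer of `θ`. -/
def Hn (n : ℕ) : Subgroup (Equiv.Perm (Fin n ⊕ Fin n)) :=
  Subgroup.centralizer {theta n}

/-- The `n`-cycle `κ = (1 2 ⋯ n)` fixing every `i^∗`. -/
def kappa (n : ℕ) : Equiv.Perm (Fin n ⊕ Fin n) :=
  Equiv.sumCongr (finRotate n) (Equiv.refl (Fin n))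

/-- The `n`-cycle `κ^∗ = (1^∗ 2^∗ ⋯ n^∗)` fixing every `i`. -/
def kappaStar (n : ℕ) : Equiv.Perm (Fin n ⊕ Fin n) :=
  Equiv.sumCongr (Equiv.refl (Fin n)) (finRotate n)

/-- `ω_H : i ↦ n+1−i, i^∗ ↦ (n+1−i)^∗`. -/
def omegaH (n : ℕ) : Equiv.Perm (Fin n ⊕ Fin n) :=
  Equiv.sumCongr (Fin.revPerm) (Fin.revPerm)

/-!
`H_n ∩ κH_nκ⁻¹` is the centralizer of the two involutions `θ` and `θ' = κθκ⁻¹`. Their product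
`θ'θ` rotates `1, …, n` cyclically, so an element of this centralizer is determined by the image
of the point `1` (here `.inl 0`). The subgroup `⟨κκ^∗, θω_H⟩` lies in the centralizer and already
moves `1` to each of the `2n` points, hence it is the whole centralizer. Its generators
`a = κκ^∗`, `b = θω_H` satisfy `b² = 1`, `bab = a⁻¹`, `a` has order `n` and `b ∉ ⟨a⟩`, which
identifies it with the dihedral group.
-/

section Conjugation

variable {G : Type*} [Group G]

theorem smul_coset_eq_iff_mem_map_conj (H : Subgroup G) (g h : G) :
    (h * g) • (H : Set G) = g • (H : Set G) ↔ h ∈ H.map (MulAut.conj g).toMonoidHom := by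
  rw [leftCoset_eq_iff, Subgroup.mem_map_equiv, MulAut.conj_symm_apply, ← H.inv_mem_iff]
  simp only [mul_inv_rev, inv_inv, mul_assoc]

theorem Subgroup.map_conj_centralizer_singleton (g k : G) :
    (centralizer {k}).map (MulAut.conj g).toMonoidHom = centralizer {g * k * g⁻¹} := by
  ext x
  rw [mem_map_equiv, MulAut.conj_symm_apply, mem_centralizer_singleton_iff,
    mem_centralizer_singleton_iff]
  constructor
  · intro h
    calc x * (g * k * g⁻¹) = g * (g⁻¹ * x * g * k) * g⁻¹ := by group
      _ = g * (k * (g⁻¹ * x * g)) * g⁻¹ := by rw [h]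
      _ = g * k * g⁻¹ * x := by group
  · intro h
    calc g⁻¹ * x * g * k = g⁻¹ * (x * (g * k * g⁻¹)) * g := by group
      _ = g⁻¹ * (g * k * g⁻¹ * x) * g := by rw [h]
      _ = k * (g⁻¹ * x * g) := by group

end Conjugation

section DihedralPresentation

variable {G : Type*} [Group G] {n : ℕ} {a b : G}

theorem zpow_eq_zpow_of_intCast_eq (ha : a ^ n = 1) {x y : ℤ} (h : (x : ZMod n) = y) :
    a ^ x = a ^ y :=
  zpow_eq_zpow_iff_modEq.mpr <| ((ZMod.intCast_eq_intCast_iff _ _ _).mp h).of_dvd <|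
    Int.natCast_dvd_natCast.mpr (orderOf_dvd_of_pow_eq_one ha)

theorem zpow_mul_eq_mul_zpow_neg (hb : b * b = 1) (hab : b * a * b = a⁻¹) (x : ℤ) :
    a ^ x * b = b * a ^ (-x) := by
  have hb_inv : b⁻¹ = b := inv_eq_of_mul_eq_one_right hb
  have hconj : b * a ^ x * b = a ^ (-x) := by
    simpa [hb_inv, hab, zpow_neg] using map_zpow (MulAut.conj b) a x
  rw [← hconj, ← mul_assoc, ← mul_assoc, hb, one_mul]

namespace DihedralGroup

/-- `i.cast : ℤ` is an integer representative of `i`, so this also covers `n = 0`. -/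
def lift (ha : a ^ n = 1) (hb : b * b = 1) (hab : b * a * b = a⁻¹) : DihedralGroup n →* G where
  toFun
    | r i => a ^ (i.cast : ℤ)
    | sr i => b * a ^ (i.cast : ℤ)
  map_one' := by
    change a ^ ((0 : ZMod n).cast : ℤ) = 1
    rw [ZMod.cast_zero, zpow_zero]
  map_mul' := by
    have hcast : ∀ {x y : ℤ}, (x : ZMod n) = y → a ^ x = a ^ y := zpow_eq_zpow_of_intCast_eq ha
    rintro (i | i) (j | j) <;> simp only [r_mul_r, r_mul_sr, sr_mul_r, sr_mul_sr]
    · rw [← zpow_add]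
      exact hcast (by simp)
    · rw [← mul_assoc, zpow_mul_eq_mul_zpow_neg hb hab, mul_assoc, ← zpow_add]
      exact congrArg (b * ·) (hcast (by push_cast [ZMod.intCast_zmod_cast]; ring))
    · rw [mul_assoc, ← zpow_add]
      exact congrArg (b * ·) (hcast (by simp))
    · rw [← mul_assoc, mul_assoc b, zpow_mul_eq_mul_zpow_neg hb hab, ← mul_assoc, hb, one_mul,
        ← zpow_add]
      exact hcast (by push_cast [ZMod.intCast_zmod_cast]; ring)

theorem range_lift (ha : a ^ n = 1) (hb : b * b = 1) (hab : b * a * b = a⁻¹) :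
    (lift ha hb hab).range = Subgroup.closure {a, b} := by
  have ha_mem : a ∈ Subgroup.closure {a, b} := Subgroup.subset_closure (Set.mem_insert _ _)
  have hb_mem : b ∈ Subgroup.closure {a, b} :=
    Subgroup.subset_closure (Set.mem_insert_of_mem _ rfl)
  apply le_antisymm
  · rintro _ ⟨i | i, rfl⟩
    · exact zpow_mem ha_mem _
    · exact mul_mem hb_mem (zpow_mem ha_mem _)
  · rw [Subgroup.closure_le, Set.insert_subset_iff, Set.singleton_subset_iff]
    refine ⟨⟨r 1, ?_⟩, ⟨sr 0, ?_⟩⟩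
    · change a ^ ((1 : ZMod n).cast : ℤ) = a
      rw [zpow_eq_zpow_of_intCast_eq ha (y := 1) (by simp), zpow_one]
    · change b * a ^ ((0 : ZMod n).cast : ℤ) = b
      rw [ZMod.cast_zero, zpow_zero, mul_one]

theorem lift_injective (ha : orderOf a = n) (hb : b * b = 1) (hab : b * a * b = a⁻¹)
    (hba : b ∉ Subgroup.zpowers a) :
    Function.Injective (lift (ha ▸ pow_orderOf_eq_one a) hb hab) := by
  rw [injective_iff_map_eq_one]
  rintro (i | i) h
  · change a ^ (i.cast : ℤ) = 1 at h
    rw [← orderOf_dvd_iff_zpow_eq_one, ha, ← ZMod.intCast_zmod_eq_zero_iff_dvd,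
      ZMod.intCast_zmod_cast] at h
    rw [h, r_zero]
  · change b * a ^ (i.cast : ℤ) = 1 at h
    rw [eq_inv_of_mul_eq_one_left h, ← zpow_neg] at hba
    exact absurd (Subgroup.zpow_mem_zpowers a _) hba

theorem nonempty_closure_mulEquiv (ha : orderOf a = n) (hb : b * b = 1) (hab : b * a * b = a⁻¹)
    (hba : b ∉ Subgroup.zpowers a) : Nonempty (Subgroup.closure {a, b} ≃* DihedralGroup n) :=
  ⟨(MulEquiv.subgroupCongr (range_lift _ hb hab).symm).trans
    (MonoidHom.ofInjective (lift_injective ha hb hab hba)).symm⟩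

end DihedralGroup

end DihedralPresentation

open Fin.NatCast Fin.CommRing

def thetaConj (n : ℕ) : Equiv.Perm (Fin n ⊕ Fin n) := kappa n * theta n * (kappa n)⁻¹

section Formulas

variable {n : ℕ} (x : Fin n)

@[simp] theorem theta_apply_inl : theta n (.inl x) = .inr x := rfl
@[simp] theorem theta_apply_inr : theta n (.inr x) = .inl x := rfl

@[simp] theorem kappa_apply_inl [NeZero n] : kappa n (.inl x) = .inl (x + 1) := by
  simp [kappa, finRotate_apply]
@[simp] theorem kappa_apply_inr : kappa n (.inr x) = .inr x := rfl

@[simp] theorem kappa_symm_apply_inl [NeZero n] : (kappa n).symm (.inl x) = .inl (x - 1) := by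
  rw [Equiv.symm_apply_eq, kappa_apply_inl, sub_add_cancel]
@[simp] theorem kappa_symm_apply_inr : (kappa n).symm (.inr x) = .inr x := by
  rw [Equiv.symm_apply_eq, kappa_apply_inr]

@[simp] theorem kappaStar_apply_inl : kappaStar n (.inl x) = .inl x := rfl
@[simp] theorem kappaStar_apply_inr [NeZero n] : kappaStar n (.inr x) = .inr (x + 1) := by
  simp [kappaStar, finRotate_apply]

@[simp] theorem omegaH_apply_inl : omegaH n (.inl x) = .inl x.rev := rfl
@[simp] theorem omegaH_apply_inr : omegaH n (.inr x) = .inr x.rev := rfl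

@[simp] theorem thetaConj_apply_inl [NeZero n] : thetaConj n (.inl x) = .inr (x - 1) := by
  simp [thetaConj]
@[simp] theorem thetaConj_apply_inr [NeZero n] : thetaConj n (.inr x) = .inl (x + 1) := by
  simp [thetaConj]

theorem kappa_mul_kappaStar_pow_apply [NeZero n] (k : ℕ) (y : Fin n ⊕ Fin n) :
    ((kappa n * kappaStar n) ^ k) y = Sum.map (· + (k : Fin n)) (· + (k : Fin n)) y := by
  induction k with
  | zero => cases y <;> simp
  | succ k ih =>
    rw [pow_succ', Equiv.Perm.mul_apply, ih]
    cases y <;> simp [add_assoc]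

end Formulas

section Stabilizer

variable {n : ℕ}

theorem Hn_inf_map_conj_kappa :
    Hn n ⊓ (Hn n).map (MulAut.conj (kappa n)).toMonoidHom =
      Subgroup.centralizer {theta n, thetaConj n} := by
  ext g
  simp only [Hn, Subgroup.map_conj_centralizer_singleton, Subgroup.mem_inf,
    Subgroup.mem_centralizer_iff, Set.mem_insert_iff, Set.mem_singleton_iff, forall_eq_or_imp,
    forall_eq, thetaConj]

variable [NeZero n]

theorem eq_one_of_mem_centralizer_of_apply_inl_zero {g : Equiv.Perm (Fin n ⊕ Fin n)}
    (hg : g ∈ Subgroup.centralizer {theta n, thetaConj n}) (h0 : g (.inl 0) = .inl 0) :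
    g = 1 := by
  rw [Subgroup.mem_centralizer_iff] at hg
  have hθ : ∀ y, theta n (g y) = g (theta n y) := DFunLike.congr_fun (hg (theta n) (by simp))
  have hθ' : ∀ y, thetaConj n (g y) = g (thetaConj n y) :=
    DFunLike.congr_fun (hg (thetaConj n) (by simp))
  -- `θ'θ` rotates the unstarred points, so `g` fixes them all
  have hinl : ∀ k : ℕ, g (.inl k) = .inl k := by
    intro k
    induction k with
    | zero => simpa using h0
    | succ k ih =>
      have hrot : (.inl (k + 1 : ℕ) : Fin n ⊕ Fin n) = thetaConj n (theta n (.inl k)) := by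
        simp
      rw [hrot, ← hθ', ← hθ, ih]
  have hinl' (x : Fin n) : g (.inl x) = .inl x := by simpa using hinl x.val
  ext (x | x)
  · simp [hinl']
  · simpa [hinl'] using (hθ (.inl x)).symm

theorem exists_mem_closure_apply_inl_zero_eq (y : Fin n ⊕ Fin n) :
    ∃ c ∈ Subgroup.closure {kappa n * kappaStar n, theta n * omegaH n}, c (.inl 0) = y := by
  have ha : kappa n * kappaStar n ∈ Subgroup.closure {kappa n * kappaStar n, theta n * omegaH n} :=
    Subgroup.subset_closure (Set.mem_insert _ _)
  have hb : theta n * omegaH n ∈ Subgroup.closure {kappa n * kappaStar n, theta n * omegaH n} :=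
    Subgroup.subset_closure (Set.mem_insert_of_mem _ rfl)
  rcases y with k | k
  · exact ⟨_, pow_mem ha k.val, by simp [kappa_mul_kappaStar_pow_apply]⟩
  · exact ⟨_, mul_mem hb (pow_mem ha k.rev.val),
      by simp only [Equiv.Perm.mul_apply, kappa_mul_kappaStar_pow_apply, Sum.map_inl, zero_add,
        Fin.cast_val_eq_self, omegaH_apply_inl, theta_apply_inl, Fin.rev_rev]⟩

theorem closure_le_centralizer_theta_thetaConj :
    Subgroup.closure {kappa n * kappaStar n, theta n * omegaH n} ≤
      Subgroup.centralizer {theta n, thetaConj n} := by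
  rw [Subgroup.closure_le]
  rintro _ (rfl | rfl) <;> rw [SetLike.mem_coe, Subgroup.mem_centralizer_iff] <;>
    rintro _ (rfl | rfl) <;> ext (x | x) <;> simp [Fin.rev_add, Fin.rev_sub, sub_add_cancel]

theorem centralizer_theta_thetaConj :
    Subgroup.centralizer {theta n, thetaConj n} =
      Subgroup.closure {kappa n * kappaStar n, theta n * omegaH n} := by
  refine le_antisymm (fun g hg => ?_) closure_le_centralizer_theta_thetaConj
  obtain ⟨c, hc, hc0⟩ := exists_mem_closure_apply_inl_zero_eq (g (.inl 0))
  have hcg : c⁻¹ * g = 1 := eq_one_of_mem_centralizer_of_apply_inl_zero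
    (mul_mem (inv_mem (closure_le_centralizer_theta_thetaConj hc)) hg)
    (by rw [Equiv.Perm.mul_apply, ← hc0]; simp)
  rwa [← eq_of_inv_mul_eq_one hcg]

end Stabilizer

section DihedralRelations

variable {n : ℕ}

theorem theta_mul_omegaH_mul_self : theta n * omegaH n * (theta n * omegaH n) = 1 := by
  ext (x | x) <;> simp

variable [NeZero n]

theorem orderOf_kappa_mul_kappaStar : orderOf (kappa n * kappaStar n) = n := by
  refine (orderOf_eq_iff (NeZero.pos n)).mpr ⟨?_, fun k hkn hk_pos hk => ?_⟩
  · ext (x | x) <;> simp [kappa_mul_kappaStar_pow_apply]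
  · have h := congrArg (· (.inl 0)) hk
    simp only [kappa_mul_kappaStar_pow_apply, Sum.map_inl, zero_add, Equiv.Perm.one_apply,
      Sum.inl.injEq] at h
    have := congrArg Fin.val h
    rw [Fin.val_natCast, Nat.mod_eq_of_lt hkn, Fin.val_zero] at this
    omega

theorem theta_mul_omegaH_conj_kappa_mul_kappaStar :
    theta n * omegaH n * (kappa n * kappaStar n) * (theta n * omegaH n) =
      (kappa n * kappaStar n)⁻¹ := by
  refine eq_inv_of_mul_eq_one_left ?_
  ext (x | x) <;> simp [Fin.rev_add]

theorem theta_mul_omegaH_notMem_zpowers :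
    theta n * omegaH n ∉ Subgroup.zpowers (kappa n * kappaStar n) := by
  rw [← (isOfFinOrder_of_finite _).mem_powers_iff_mem_zpowers]
  rintro ⟨k, hk⟩
  have h := congrArg (· (.inl 0)) hk
  simp [kappa_mul_kappaStar_pow_apply] at h

end DihedralRelations

theorem statement17 (n : ℕ) (hn : 3 ≤ n) :
    -- the stabilizer of the coset `κH_n` in `H_n` is `H_n ∩ κH_nκ⁻¹` …
    (∀ h : Equiv.Perm (Fin n ⊕ Fin n), h ∈ Hn n →
      ((h * kappa n) • ((Hn n : Set (Equiv.Perm (Fin n ⊕ Fin n)))) =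
          (kappa n) • ((Hn n : Set (Equiv.Perm (Fin n ⊕ Fin n)))) ↔
        h ∈ Subgroup.map (MulAut.conj (kappa n)).toMonoidHom (Hn n))) ∧
    -- … and equals the subgroup generated by `κκ^∗` and `θω_H`
    Hn n ⊓ Subgroup.map (MulAut.conj (kappa n)).toMonoidHom (Hn n) =
      Subgroup.closure {kappa n * kappaStar n, theta n * omegaH n} ∧
    -- this subgroup is isomorphic to the dihedral group of order `2n`
    Nonempty
      ((Subgroup.closure {kappa n * kappaStar n, theta n * omegaH n} :
          Subgroup (Equiv.Perm (Fin n ⊕ Fin n))) ≃* DihedralGroup n) := by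
  have : NeZero n := ⟨by omega⟩
  refine ⟨fun h _ => smul_coset_eq_iff_mem_map_conj (Hn n) (kappa n) h, ?_, ?_⟩
  · rw [Hn_inf_map_conj_kappa, centralizer_theta_thetaConj]
  · exact DihedralGroup.nonempty_closure_mulEquiv orderOf_kappa_mul_kappaStar
      theta_mul_omegaH_mul_self theta_mul_omegaH_conj_kappa_mul_kappaStar
      theta_mul_omegaH_notMem_zpowers
end
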